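/- If A is an n×n complex matrix with numerical range contained in the sector S_α for α ∈ [0, π/2), then |det A| ≤ secⁿ(α) · det(Re A). -/

import Mathlib

/-! Since `Re A` is positive definite, `Re A = Bᴴ B` with `B` invertible, and then
`A = Bᴴ (1 + i S) B` for the Hermitian matrix `S = B⁻ᴴ (Im A) B⁻¹`. Hence
`det A = det (Re A) · ∏ⱼ (1 + i λⱼ)` over the eigenvalues `λⱼ` of `S`. The sector condition
`|x* (Im A) x| ≤ tan α · x* (Re A) x` becomes `|v* S v| ≤ tan α · v* v` under `x = B⁻¹ v`, so
`|λⱼ| ≤ tan α` and `|1 + i λⱼ| = √(1 + λⱼ²) ≤ sec α`. -/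

open Matrix
open scoped ComplexOrder

noncomputable section
namespace Paper

variable {n : ℕ}

/-- Real part `(A + Aᴴ)/2`. -/
def re (A : Matrix (Fin n) (Fin n) ℂ) : Matrix (Fin n) (Fin n) ℂ := (2⁻¹ : ℂ) • (A + Aᴴ)

/-- Imaginary part `(A - Aᴴ)/(2i)`. -/
def im (A : Matrix (Fin n) (Fin n) ℂ) : Matrix (Fin n) (Fin n) ℂ :=
  (2 * Complex.I)⁻¹ • (A - Aᴴ)

/-- The sector `S_α`. -/
def sector (α : ℝ) : Set ℂ := {z | 0 < z.re ∧ |z.im| ≤ z.re * Real.tan α}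

/-- Numerical range of a matrix. -/
def numericalRange (A : Matrix (Fin n) (Fin n) ℂ) : Set ℂ :=
  {z | ∃ x : Fin n → ℂ, star x ⬝ᵥ x = 1 ∧ z = star x ⬝ᵥ (A *ᵥ x)}

/-- Loewner order: `X ≤ Y` iff `Y - X` is positive semidefinite. -/
def loewnerLE (X Y : Matrix (Fin n) (Fin n) ℂ) : Prop := (Y - X).PosSemidef

lemma re_isHermitian (A : Matrix (Fin n) (Fin n) ℂ) : (re A).IsHermitian := by
  show ((2⁻¹ : ℂ) • (A + Aᴴ))ᴴ = (2⁻¹ : ℂ) • (A + Aᴴ)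
  rw [Matrix.conjTranspose_smul, Matrix.conjTranspose_add,
    Matrix.conjTranspose_conjTranspose, add_comm Aᴴ A]
  simp

/-- The `j`-th largest element of `v` (descending sort). -/
def nthLargest (v : Fin n → ℝ) (j : Fin n) : ℝ :=
  ((List.ofFn v).mergeSort (fun a b => decide (b ≤ a))).get
    (Fin.cast (by simp) j)

/-- `j`-th largest eigenvalue of a Hermitian matrix. -/
def eigDesc {A : Matrix (Fin n) (Fin n) ℂ} (hA : A.IsHermitian) (j : Fin n) : ℝ :=
  nthLargest hA.eigenvalues j

/-- `j`-th largest singular value. -/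
def singular (A : Matrix (Fin n) (Fin n) ℂ) (j : Fin n) : ℝ :=
  nthLargest (fun i => Real.sqrt ((Matrix.isHermitian_conjTranspose_mul_self A).eigenvalues i)) j

/-- Square root of a positive semidefinite matrix (the removed `Matrix.PosSemidef.sqrt`,
spelled out with its old definition). -/
def posSemidefSqrt {A : Matrix (Fin n) (Fin n) ℂ} (hA : A.PosSemidef) : Matrix (Fin n) (Fin n) ℂ :=
  (hA.1.eigenvectorUnitary : Matrix (Fin n) (Fin n) ℂ) *
    diagonal ((RCLike.ofReal : ℝ → ℂ) ∘ Real.sqrt ∘ hA.1.eigenvalues) *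
    (star hA.1.eigenvectorUnitary : Matrix (Fin n) (Fin n) ℂ)

/-- Weighted geometric mean of positive definite matrices. -/
def sharp (v : ℝ) {A B : Matrix (Fin n) (Fin n) ℂ} (hA : A.PosDef) (hB : B.PosDef) :
    Matrix (Fin n) (Fin n) ℂ :=
  posSemidefSqrt hA.posSemidef *
    (Matrix.isHermitian_mul_mul_conjTranspose (posSemidefSqrt hA.posSemidef)⁻¹ hB.1).cfc
      (fun x => Real.rpow x v) * posSemidefSqrt hA.posSemidef

/-- Weighted arithmetic mean. -/
def arith (v : ℝ) (A B : Matrix (Fin n) (Fin n) ℂ) : Matrix (Fin n) (Fin n) ℂ :=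
  (1 - v) • A + v • B

/-- Weighted harmonic mean. -/
def harm (v : ℝ) (A B : Matrix (Fin n) (Fin n) ℂ) : Matrix (Fin n) (Fin n) ℂ :=
  ((1 - v) • A⁻¹ + v • B⁻¹)⁻¹

/-- Kantorovich constant. -/
def K (h : ℝ) : ℝ := (h + 1) ^ 2 / (4 * h)


end Paper

namespace Matrix

section StarCommRing

variable {ι κ R : Type*} [Fintype ι] [Fintype κ]

theorem dotProduct_conjTranspose_mulVec [CommSemiring R] [StarRing R] (A : Matrix ι ι R)
    (x : ι → R) : star x ⬝ᵥ (Aᴴ *ᵥ x) = star (star x ⬝ᵥ (A *ᵥ x)) := by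
  rw [star_dotProduct, star_mulVec, dotProduct_mulVec, conjTranspose_conjTranspose]

theorem dotProduct_conjTranspose_mul_mul_mulVec [CommSemiring R] [StarRing R] (C : Matrix ι κ R)
    (X : Matrix ι ι R) (v : κ → R) :
    star v ⬝ᵥ ((Cᴴ * X * C) *ᵥ v) = star (C *ᵥ v) ⬝ᵥ (X *ᵥ (C *ᵥ v)) := by
  simp only [star_mulVec, dotProduct_mulVec, vecMul_vecMul, mulVec_mulVec, Matrix.mul_assoc]

theorem det_add_smul_eq_of_eq_conjTranspose_mul_self [DecidableEq ι] [CommRing R] [StarRing R]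
    {P M B : Matrix ι ι R} (hB : IsUnit B) (hP : P = Bᴴ * B) (c : R) :
    (P + c • M).det = P.det * (1 + c • ((B⁻¹)ᴴ * M * B⁻¹)).det := by
  have hBu := (isUnit_iff_isUnit_det B).mp hB
  have hcongr : P + c • M = Bᴴ * (1 + c • ((B⁻¹)ᴴ * M * B⁻¹)) * B := by
    have hBi' : Bᴴ * (B⁻¹)ᴴ = 1 := by
      rw [← conjTranspose_mul, nonsing_inv_mul B hBu, conjTranspose_one]
    simp only [mul_add, add_mul, mul_one, mul_smul_comm, smul_mul_assoc, ← mul_assoc, hBi',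
      one_mul, hP]
    rw [mul_assoc M, nonsing_inv_mul B hBu, mul_one]
  rw [hcongr, hP, det_mul, det_mul, det_mul]
  ring

end StarCommRing

variable {ι : Type*} [Fintype ι] [DecidableEq ι]

theorem IsHermitian.abs_eigenvalues_le {𝕜 : Type*} [RCLike 𝕜] {S : Matrix ι ι 𝕜}
    (hS : S.IsHermitian) {t : ℝ}
    (h : ∀ v : ι → 𝕜, |RCLike.re (star v ⬝ᵥ (S *ᵥ v))| ≤ t * RCLike.re (star v ⬝ᵥ v))
    (j : ι) : |hS.eigenvalues j| ≤ t := by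
  have hv : star ⇑(hS.eigenvectorBasis j) ⬝ᵥ ⇑(hS.eigenvectorBasis j) = 1 := by
    rw [dotProduct_comm, ← EuclideanSpace.inner_eq_star_dotProduct, inner_self_eq_norm_sq_to_K,
      hS.eigenvectorBasis.orthonormal.1 j]
    simp
  simpa [hS.eigenvalues_eq, hv] using h (hS.eigenvectorBasis j)

theorem IsHermitian.det_one_add_I_smul {S : Matrix ι ι ℂ} (hS : S.IsHermitian) :
    (1 + Complex.I • S).det = ∏ j, (1 + Complex.I * hS.eigenvalues j) := by
  -- `1 + iS = -i (i - S)`, so the determinant is read off the characteristic polynomial of `S`.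
  have h : 1 + Complex.I • S = (-Complex.I) • (scalar ι Complex.I - S) := by
    rw [scalar_apply, ← smul_one_eq_diagonal, smul_sub, smul_smul, neg_mul, Complex.I_mul_I,
      neg_neg, one_smul, neg_smul, sub_neg_eq_add]
  rw [h, det_smul, ← eval_charpoly, hS.charpoly_eq, Polynomial.eval_prod, Fintype.card,
    ← Finset.prod_const, ← Finset.prod_mul_distrib]
  refine Finset.prod_congr rfl fun j _ => ?_
  simp only [Polynomial.eval_sub, Polynomial.eval_X, Polynomial.eval_C]
  ring_nf
  simp only [Complex.coe_algebraMap, Complex.I_sq, sub_neg_eq_add]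
  ring

end Matrix

theorem Complex.norm_one_add_I_mul_le_inv_cos {x α : ℝ} (hcos : 0 < Real.cos α)
    (hx : |x| ≤ Real.tan α) : ‖1 + Complex.I * x‖ ≤ (Real.cos α)⁻¹ := by
  have hnorm : ‖1 + Complex.I * x‖ = √(1 + x ^ 2) := by
    simpa [mul_comm] using Complex.norm_add_mul_I 1 x
  rw [hnorm, ← Real.inv_sqrt_one_add_tan_sq hcos, inv_inv]
  exact Real.sqrt_le_sqrt (add_le_add_right (sq_le_sq' (abs_le.mp hx).1 (abs_le.mp hx).2) 1)

open scoped MatrixOrder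

namespace Paper

variable {n : ℕ}

theorem dotProduct_re_mulVec (A : Matrix (Fin n) (Fin n) ℂ) (x : Fin n → ℂ) :
    star x ⬝ᵥ (re A *ᵥ x) = ((star x ⬝ᵥ (A *ᵥ x)).re : ℂ) := by
  rw [re, smul_mulVec, dotProduct_smul, add_mulVec, dotProduct_add,
    dotProduct_conjTranspose_mulVec, Complex.star_def, Complex.add_conj, smul_eq_mul]
  push_cast
  ring

theorem dotProduct_im_mulVec (A : Matrix (Fin n) (Fin n) ℂ) (x : Fin n → ℂ) :
    star x ⬝ᵥ (im A *ᵥ x) = ((star x ⬝ᵥ (A *ᵥ x)).im : ℂ) := by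
  rw [im, smul_mulVec, dotProduct_smul, sub_mulVec, dotProduct_sub,
    dotProduct_conjTranspose_mulVec, Complex.star_def, Complex.sub_conj, smul_eq_mul]
  field_simp [Complex.I_ne_zero]
  push_cast
  ring

theorem im_isHermitian (A : Matrix (Fin n) (Fin n) ℂ) : (im A).IsHermitian := by
  have hstar : star (2 * Complex.I)⁻¹ = -(2 * Complex.I)⁻¹ := by simp
  rw [IsHermitian, im, conjTranspose_smul, conjTranspose_sub, conjTranspose_conjTranspose, hstar,
    neg_smul, ← smul_neg, neg_sub]

theorem re_add_I_smul_im (A : Matrix (Fin n) (Fin n) ℂ) : re A + Complex.I • im A = A := by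
  have hI : Complex.I * (2 * Complex.I)⁻¹ = 2⁻¹ := by field_simp
  rw [re, im, smul_smul, hI, ← smul_add, add_add_sub_cancel, ← two_smul ℂ, smul_smul,
    inv_mul_cancel₀ two_ne_zero, one_smul]

theorem ofReal_mul_mem_sector {α c : ℝ} (hc : 0 < c) {z : ℂ} (hz : z ∈ sector α) :
    (c : ℂ) * z ∈ sector α := by
  obtain ⟨hre, him⟩ := hz
  refine ⟨by simpa using mul_pos hc hre, ?_⟩
  simp only [Complex.re_ofReal_mul, Complex.im_ofReal_mul, abs_mul, abs_of_pos hc, mul_assoc]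
  exact mul_le_mul_of_nonneg_left him hc.le

theorem dotProduct_mulVec_mem_sector {α : ℝ} {A : Matrix (Fin n) (Fin n) ℂ}
    (hA : numericalRange A ⊆ sector α) {x : Fin n → ℂ} (hx : x ≠ 0) :
    star x ⬝ᵥ (A *ᵥ x) ∈ sector α := by
  set c := (star x ⬝ᵥ x).re
  have hxx : star x ⬝ᵥ x = c := Complex.eq_re_of_ofReal_le (dotProduct_star_self_nonneg x)
  have hc : 0 < c := by
    have := dotProduct_star_self_pos_iff.mpr hx
    rw [hxx] at this
    exact_mod_cast this
  set y := (√c)⁻¹ • x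
  have hstar : star y = (√c)⁻¹ • star x := by simp [y, star_smul]
  have hyy : star y ⬝ᵥ y = 1 := by
    rw [hstar, smul_dotProduct, dotProduct_smul, hxx, smul_smul, ← mul_inv,
      Real.mul_self_sqrt hc.le]
    simp [hc.ne']
  have hyA : star x ⬝ᵥ (A *ᵥ x) = (c : ℂ) * (star y ⬝ᵥ (A *ᵥ y)) := by
    rw [hstar, mulVec_smul, smul_dotProduct, dotProduct_smul, smul_smul, ← mul_inv,
      Real.mul_self_sqrt hc.le, Complex.real_smul, ← mul_assoc]
    push_cast
    rw [mul_inv_cancel₀ (by exact_mod_cast hc.ne'), one_mul]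
  rw [hyA]
  exact ofReal_mul_mem_sector hc (hA ⟨y, hyy, rfl⟩)

theorem re_posDef {α : ℝ} {A : Matrix (Fin n) (Fin n) ℂ} (hA : numericalRange A ⊆ sector α) :
    (re A).PosDef :=
  PosDef.of_dotProduct_mulVec_pos (re_isHermitian A) fun x hx => by
    rw [dotProduct_re_mulVec]
    exact_mod_cast (dotProduct_mulVec_mem_sector hA hx).1

theorem abs_re_dotProduct_im_mulVec_le {α : ℝ} {A : Matrix (Fin n) (Fin n) ℂ}
    (hA : numericalRange A ⊆ sector α) (x : Fin n → ℂ) :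
    |(star x ⬝ᵥ (im A *ᵥ x)).re| ≤ Real.tan α * (star x ⬝ᵥ (re A *ᵥ x)).re := by
  rw [dotProduct_re_mulVec, dotProduct_im_mulVec, Complex.ofReal_re, Complex.ofReal_re, mul_comm]
  rcases eq_or_ne x 0 with rfl | hx
  · simp
  · exact (dotProduct_mulVec_mem_sector hA hx).2

theorem abs_re_dotProduct_congr_im_le {α : ℝ} {A B : Matrix (Fin n) (Fin n) ℂ}
    (hA : numericalRange A ⊆ sector α) (hB : IsUnit B) (hRe : re A = Bᴴ * B) (v : Fin n → ℂ) :
    |(star v ⬝ᵥ (((B⁻¹)ᴴ * im A * B⁻¹) *ᵥ v)).re| ≤ Real.tan α * (star v ⬝ᵥ v).re := by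
  have hv : v = B *ᵥ (B⁻¹ *ᵥ v) := by
    rw [mulVec_mulVec, mul_nonsing_inv B ((isUnit_iff_isUnit_det B).mp hB), one_mulVec]
  have hre : star v ⬝ᵥ v = star (B⁻¹ *ᵥ v) ⬝ᵥ (re A *ᵥ (B⁻¹ *ᵥ v)) := by
    rw [hRe, ← mul_one Bᴴ, dotProduct_conjTranspose_mul_mul_mulVec, one_mulVec, ← hv]
  rw [dotProduct_conjTranspose_mul_mul_mulVec, hre]
  exact abs_re_dotProduct_im_mulVec_le hA _

/-- `|det A| ≤ secⁿ α · det (Re A)` for a sector matrix. -/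
theorem abs_det_le_sec_pow_det_re (α : ℝ) (hα : α ∈ Set.Ico 0 (Real.pi / 2))
    (A : Matrix (Fin n) (Fin n) ℂ) (hA : numericalRange A ⊆ sector α) :
    ‖A.det‖ ≤ (Real.cos α)⁻¹ ^ n * ((re A).det).re := by
  have hcos : 0 < Real.cos α :=
    Real.cos_pos_of_mem_Ioo ⟨by linarith [hα.1, Real.pi_pos], hα.2⟩
  have hR := re_posDef hA
  obtain ⟨B, hB⟩ : ∃ B, re A = Bᴴ * B :=
    CStarAlgebra.nonneg_iff_eq_star_mul_self.mp hR.posSemidef.nonneg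
  have hBu : IsUnit B := by
    rw [isUnit_iff_isUnit_det, isUnit_iff_ne_zero]
    intro h
    exact hR.det_pos.ne' (by rw [hB, det_mul, h, mul_zero])
  set S := (B⁻¹)ᴴ * im A * B⁻¹
  have hS : S.IsHermitian := isHermitian_conjTranspose_mul_mul _ (im_isHermitian A)
  have hdet : A.det = (re A).det * ∏ j, (1 + Complex.I * hS.eigenvalues j) := by
    rw [← hS.det_one_add_I_smul, ← det_add_smul_eq_of_eq_conjTranspose_mul_self hBu hB,
      re_add_I_smul_im]
  have hdetR : ‖(re A).det‖ = ((re A).det).re := (Complex.re_eq_norm.mpr hR.det_pos.le).symm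
  calc ‖A.det‖ = ((re A).det).re * ∏ j, ‖1 + Complex.I * hS.eigenvalues j‖ := by
        rw [hdet, norm_mul, norm_prod, hdetR]
    _ ≤ ((re A).det).re * ∏ _j : Fin n, (Real.cos α)⁻¹ := by
        gcongr with j
        · rw [← hdetR]; exact norm_nonneg _
        · exact Complex.norm_one_add_I_mul_le_inv_cos hcos
            (hS.abs_eigenvalues_le (abs_re_dotProduct_congr_im_le hA hBu hB) j)
    _ = (Real.cos α)⁻¹ ^ n * ((re A).det).re := by
        rw [Finset.prod_const, Finset.card_univ, Fintype.card_fin, mul_comm]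

end Paper
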